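/- arXiv:1312.3915 — 2 statements merged into one kernel-verified Lean document; each statement's English description precedes it below -/
import Mathlib

section
/- Strong maximum principle: let w_Ω be the minimizer of F_Ω(u) = ½∫|Du|²dm + ½∫u²dm − ∫u dm over H₀(Ω). Then for every u ∈ H₀(Ω), the set {u ≠ 0} is contained in {w_Ω > 0} up to m-null sets. -/
/-
Perturb the minimizer upwards. For `u ∈ H₀(Ω)` and `ε > 0` the competitor `w ⊔ ε|u|` lies in
`H₀(Ω)`; by (D3)–(D4) its quadratic energy exceeds that of `w` by at most `ε²‖u‖²_H / 2`, while
its linear term gains at least `ε ∫_{w ≤ 0} |u|`. Minimality of `w` therefore gives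
`∫_{w ≤ 0} |u| ≤ ε ‖u‖²_H / 2` for every `ε > 0`, so `u = 0` a.e. on `{w ≤ 0}`.
-/

open MeasureTheory Filter
open scoped ENNReal

namespace AbsSob

variable {X : Type*} [MeasurableSpace X]

/-- Abstract Sobolev setting: a Riesz subspace `H` of `L²(X,m)` with the Stone
property (H1)-(H2), together with a gradient-like map `D` satisfying (D1)-(D4). -/
structure Setting (X : Type*) [MeasurableSpace X] (m : Measure X) where
  H : Set (X → ℝ)
  D : (X → ℝ) → X → ℝ
  zero_mem : (fun _ => (0 : ℝ)) ∈ H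
  add_mem : ∀ ⦃u v : X → ℝ⦄, u ∈ H → v ∈ H → u + v ∈ H
  smul_mem : ∀ (c : ℝ) ⦃u : X → ℝ⦄, u ∈ H → c • u ∈ H
  sup_mem : ∀ ⦃u v : X → ℝ⦄, u ∈ H → v ∈ H → u ⊔ v ∈ H
  inf_mem : ∀ ⦃u v : X → ℝ⦄, u ∈ H → v ∈ H → u ⊓ v ∈ H
  stone : ∀ ⦃u : X → ℝ⦄, u ∈ H → u ⊓ 1 ∈ H
  memL2 : ∀ ⦃u : X → ℝ⦄, u ∈ H → MemLp u 2 m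
  gradL2 : ∀ ⦃u : X → ℝ⦄, u ∈ H → MemLp (D u) 2 m
  D1 : ∀ ⦃u : X → ℝ⦄, u ∈ H → ∀ᵐ x ∂m, 0 ≤ D u x
  D2 : ∀ ⦃u v : X → ℝ⦄, u ∈ H → v ∈ H → ∀ᵐ x ∂m, D (u + v) x ≤ D u x + D v x
  D3 : ∀ (c : ℝ) ⦃u : X → ℝ⦄, u ∈ H → ∀ᵐ x ∂m, D (c • u) x = |c| * D u x
  D4 : ∀ ⦃u v : X → ℝ⦄, u ∈ H → v ∈ H → ∀ᵐ x ∂m,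
      D (u ⊔ v) x = if v x < u x then D u x else D v x

variable {m : Measure X}

/-- Square of the `H`-norm: `‖u‖_H² = ‖u‖²_{L²} + ‖Du‖²_{L²}`. -/
noncomputable def normHsq (S : Setting X m) (u : X → ℝ) : ℝ :=
  ∫ x, (u x) ^ 2 ∂m + ∫ x, (S.D u x) ^ 2 ∂m

/-- Sobolev functions vanishing (m-a.e.) outside `Ω`. -/
def H0 (S : Setting X m) (Ω : Set X) : Set (X → ℝ) :=
  {u | u ∈ S.H ∧ ∀ᵐ x ∂m, x ∉ Ω → u x = 0}

/-- The functional `F^{a,f}(u) = ½∫|Du|² + (a/2)∫u² − ∫ f u`. -/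
noncomputable def F (S : Setting X m) (a : ℝ) (f : X → ℝ) (u : X → ℝ) : ℝ :=
  (1 / 2) * ∫ x, (S.D u x) ^ 2 ∂m + (a / 2) * ∫ x, (u x) ^ 2 ∂m - ∫ x, f x * u x ∂m

/-- `w` is a minimizer of `F^{a,f}` over `H₀(Ω)`. -/
def IsMinimizer (S : Setting X m) (Ω : Set X) (a : ℝ) (f : X → ℝ) (w : X → ℝ) : Prop :=
  w ∈ H0 S Ω ∧ ∀ u ∈ H0 S Ω, F S a f w ≤ F S a f u

/-- (ℋ2): the inclusion `H ↪ L²` is compact. -/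
def CompactEmbedding (S : Setting X m) : Prop :=
  ∀ u : ℕ → X → ℝ, (∀ n, u n ∈ S.H) → (∃ C : ℝ, ∀ n, normHsq S (u n) ≤ C) →
    ∃ (φ : ℕ → ℕ) (v : X → ℝ), StrictMono φ ∧ v ∈ S.H ∧
      Tendsto (fun k => ∫ x, (u (φ k) x - v x) ^ 2 ∂m) atTop (nhds 0)

/-- (ℋ3): lower semicontinuity of the gradient energy along `L²`-convergent
`H`-bounded sequences, whose limit moreover belongs to `H`. -/
def GradLSC (S : Setting X m) : Prop :=
  ∀ (u : ℕ → X → ℝ) (v : X → ℝ), (∀ n, u n ∈ S.H) →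
    (∃ C : ℝ, ∀ n, normHsq S (u n) ≤ C) →
    Tendsto (fun n => ∫ x, (u n x - v x) ^ 2 ∂m) atTop (nhds 0) →
    v ∈ S.H ∧ ∫ x, (S.D v x) ^ 2 ∂m ≤ liminf (fun n => ∫ x, (S.D (u n) x) ^ 2 ∂m) atTop

/-- Energy sets: Borel sets coinciding up to an `m`-null set with `{w_Ω > 0}`. -/
def IsEnergySet (S : Setting X m) (Ω : Set X) : Prop :=
  MeasurableSet Ω ∧ ∃ w, IsMinimizer S Ω 1 (fun _ => 1) w ∧ m (Ω \ {x | 0 < w x}) = 0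

namespace Setting

variable (S : Setting X m) {u v : X → ℝ}

theorem abs_mem (hu : u ∈ S.H) : |u| ∈ S.H :=
  S.sup_mem hu (by simpa using S.smul_mem (-1) hu)

theorem integrable [IsFiniteMeasure m] (hu : u ∈ S.H) : Integrable u m :=
  (S.memL2 hu).integrable one_le_two

theorem integrable_indicator_le_zero [IsFiniteMeasure m] {w : X → ℝ} (hw : w ∈ S.H)
    (hu : u ∈ S.H) : Integrable ({x | w x ≤ 0}.indicator u) m :=
  (S.integrable hu).indicator₀ <|
    nullMeasurableSet_le (S.memL2 hw).aestronglyMeasurable.aemeasurable aemeasurable_const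

theorem integrable_sq (hu : u ∈ S.H) : Integrable (fun x => u x ^ 2) m :=
  (S.memL2 hu).integrable_sq

theorem integrable_sq_D (hu : u ∈ S.H) : Integrable (fun x => S.D u x ^ 2) m :=
  (S.gradL2 hu).integrable_sq

theorem ae_sq_D_sup_le (hu : u ∈ S.H) (hv : v ∈ S.H) :
    ∀ᵐ x ∂m, S.D (u ⊔ v) x ^ 2 ≤ S.D u x ^ 2 + S.D v x ^ 2 := by
  filter_upwards [S.D4 hu hv] with x hx
  rw [hx]
  split_ifs <;> nlinarith [sq_nonneg (S.D u x), sq_nonneg (S.D v x)]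

theorem normHsq_sup_le (hu : u ∈ S.H) (hv : v ∈ S.H) :
    normHsq S (u ⊔ v) ≤ normHsq S u + normHsq S v := by
  have hsq : ∀ x, (u ⊔ v) x ^ 2 ≤ u x ^ 2 + v x ^ 2 := fun x => by
    rcases max_cases (u x) (v x) with ⟨h, -⟩ | ⟨h, -⟩ <;>
      simp only [Pi.sup_apply, h] <;> nlinarith [sq_nonneg (u x), sq_nonneg (v x)]
  have hL2 : ∫ x, (u ⊔ v) x ^ 2 ∂m ≤ ∫ x, u x ^ 2 ∂m + ∫ x, v x ^ 2 ∂m := by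
    rw [← integral_add (S.integrable_sq hu) (S.integrable_sq hv)]
    exact integral_mono (S.integrable_sq (S.sup_mem hu hv))
      ((S.integrable_sq hu).add (S.integrable_sq hv)) hsq
  have hgrad : ∫ x, S.D (u ⊔ v) x ^ 2 ∂m ≤ ∫ x, S.D u x ^ 2 ∂m + ∫ x, S.D v x ^ 2 ∂m := by
    rw [← integral_add (S.integrable_sq_D hu) (S.integrable_sq_D hv)]
    exact integral_mono_ae (S.integrable_sq_D (S.sup_mem hu hv))
      ((S.integrable_sq_D hu).add (S.integrable_sq_D hv)) (S.ae_sq_D_sup_le hu hv)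
  unfold normHsq
  linarith

theorem normHsq_smul (c : ℝ) (hu : u ∈ S.H) : normHsq S (c • u) = c ^ 2 * normHsq S u := by
  have hgrad : ∫ x, S.D (c • u) x ^ 2 ∂m = ∫ x, c ^ 2 * S.D u x ^ 2 ∂m :=
    integral_congr_ae <| (S.D3 c hu).mono fun x hx => by
      simp only [hx, mul_pow, sq_abs]
  simp only [normHsq, hgrad, Pi.smul_apply, smul_eq_mul, mul_pow, integral_const_mul]
  ring

end Setting

variable {S : Setting X m} {Ω : Set X} {u v w : X → ℝ}

theorem sup_mem_H0 (hu : u ∈ H0 S Ω) (hv : v ∈ H0 S Ω) : u ⊔ v ∈ H0 S Ω :=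
  ⟨S.sup_mem hu.1 hv.1, by
    filter_upwards [hu.2, hv.2] with x hux hvx hx
    simp [hux hx, hvx hx]⟩

theorem smul_mem_H0 (c : ℝ) (hu : u ∈ H0 S Ω) : c • u ∈ H0 S Ω :=
  ⟨S.smul_mem c hu.1, hu.2.mono fun x hux hx => by simp [hux hx]⟩

theorem abs_mem_H0 (hu : u ∈ H0 S Ω) : |u| ∈ H0 S Ω :=
  ⟨S.abs_mem hu.1, hu.2.mono fun x hux hx => by simp [hux hx]⟩

theorem F_one_eq_half_normHsq_sub_integral (u : X → ℝ) :
    F S 1 (fun _ => 1) u = normHsq S u / 2 - ∫ x, u x ∂m := by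
  simp only [F, normHsq, one_mul]
  ring

theorem IsMinimizer.integral_sup_sub_le [IsFiniteMeasure m]
    (hw : IsMinimizer S Ω 1 (fun _ => 1) w) (hv : v ∈ H0 S Ω) :
    ∫ x, ((w ⊔ v) x - w x) ∂m ≤ normHsq S v / 2 := by
  have hmin := hw.2 _ (sup_mem_H0 hw.1 hv)
  have hnorm := S.normHsq_sup_le hw.1.1 hv.1
  rw [F_one_eq_half_normHsq_sub_integral, F_one_eq_half_normHsq_sub_integral] at hmin
  rw [integral_sub (S.integrable (S.sup_mem hw.1.1 hv.1)) (S.integrable hw.1.1)]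
  linarith

theorem IsMinimizer.integral_indicator_nonpos_le [IsFiniteMeasure m]
    (hw : IsMinimizer S Ω 1 (fun _ => 1) w) (hu : u ∈ H0 S Ω) {ε : ℝ} (hε : 0 < ε) :
    ∫ x, {x | w x ≤ 0}.indicator u x ∂m ≤ ε * (normHsq S u / 2) := by
  have hlow : ∀ x, ε * {x | w x ≤ 0}.indicator u x ≤ (w ⊔ ε • u) x - w x := fun x => by
    by_cases hx : w x ≤ 0
    · simp only [Set.indicator_of_mem (show x ∈ {x | w x ≤ 0} from hx), Pi.sup_apply,
        Pi.smul_apply, smul_eq_mul]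
      linarith [le_max_right (w x) (ε * u x)]
    · simp only [Set.indicator_of_notMem (show x ∉ {x | w x ≤ 0} from hx), mul_zero,
        Pi.sup_apply, sub_nonneg, le_max_left]
  have hvH := S.sup_mem hw.1.1 (S.smul_mem ε hu.1)
  have hscaled : ε * ∫ x, {x | w x ≤ 0}.indicator u x ∂m ≤ ε * (ε * (normHsq S u / 2)) := by
    calc ε * ∫ x, {x | w x ≤ 0}.indicator u x ∂m
        = ∫ x, ε * {x | w x ≤ 0}.indicator u x ∂m := (integral_const_mul _ _).symm
      _ ≤ ∫ x, ((w ⊔ ε • u) x - w x) ∂m :=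
          integral_mono ((S.integrable_indicator_le_zero hw.1.1 hu.1).const_mul ε)
            ((S.integrable hvH).sub (S.integrable hw.1.1)) hlow
      _ ≤ normHsq S (ε • u) / 2 := hw.integral_sup_sub_le (smul_mem_H0 ε hu)
      _ = ε * (ε * (normHsq S u / 2)) := by rw [S.normHsq_smul ε hu.1]; ring
  exact le_of_mul_le_mul_left hscaled hε

open Topology in
theorem IsMinimizer.integral_indicator_nonpos_le_zero [IsFiniteMeasure m]
    (hw : IsMinimizer S Ω 1 (fun _ => 1) w) (hu : u ∈ H0 S Ω) :
    ∫ x, {x | w x ≤ 0}.indicator u x ∂m ≤ 0 := by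
  have hlim : Tendsto (fun ε : ℝ => ε * (normHsq S u / 2)) (𝓝[>] 0) (𝓝 0) := by
    simpa using ((tendsto_id (x := 𝓝 (0 : ℝ))).mul_const (normHsq S u / 2)).mono_left
      nhdsWithin_le_nhds
  exact ge_of_tendsto hlim (eventually_nhdsWithin_of_forall fun ε hε =>
    hw.integral_indicator_nonpos_le hu hε)

theorem statement_10_general {X : Type*} [MeasurableSpace X] {m : Measure X} [IsFiniteMeasure m]
    (S : Setting X m)
    {Ω : Set X}
    {w : X → ℝ} (hw : IsMinimizer S Ω 1 (fun _ => 1) w)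
    {u : X → ℝ} (hu : u ∈ H0 S Ω) :
    ∀ᵐ x ∂m, u x ≠ 0 → 0 < w x := by
  have hnonneg : 0 ≤ {x | w x ≤ 0}.indicator |u| :=
    Set.indicator_nonneg fun x _ => abs_nonneg (u x)
  have hintegral : ∫ x, {x | w x ≤ 0}.indicator |u| x ∂m = 0 :=
    le_antisymm (hw.integral_indicator_nonpos_le_zero (abs_mem_H0 hu)) (integral_nonneg hnonneg)
  have hzero : {x | w x ≤ 0}.indicator |u| =ᵐ[m] 0 :=
    (integral_eq_zero_iff_of_nonneg hnonneg
      (S.integrable_indicator_le_zero hw.1.1 (S.abs_mem hu.1))).1 hintegral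
  filter_upwards [hzero] with x hx hux
  by_contra! hwx
  simp [Set.indicator_of_mem (show x ∈ {x | w x ≤ 0} from hwx), hux] at hx

/-- strong maximum principle: for each `u ∈ H₀(Ω)`,
`{u ≠ 0} ⊆ {w_Ω > 0}` up to an m-null set. -/
theorem statement_10 {X : Type*} [MeasurableSpace X] {m : Measure X} [IsFiniteMeasure m]
    (S : Setting X m) (hcpt : CompactEmbedding S) (hlsc : GradLSC S)
    {Ω : Set X} (hΩ : MeasurableSet Ω)
    {w : X → ℝ} (hw : IsMinimizer S Ω 1 (fun _ => 1) w)
    {u : X → ℝ} (hu : u ∈ H0 S Ω) :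
    ∀ᵐ x ∂m, u x ≠ 0 → 0 < w x :=
  statement_10_general S hw hu

end AbsSob
end

section
/- If the energy sets Ω_n weak-γ-converge to Ω with w = L²-lim w_{Ω_n}, then w ≤ w_Ω m-a.e. -/
open MeasureTheory Filter
open scoped ENNReal

namespace AbsSob

variable {X : Type*} [MeasurableSpace X]

variable {m : Measure X}

/-!
Put `uₙ = wₙ ⊔ W`. Since `W ≥ 0`, the function `wₙ ⊓ W` is admissible for `Ωₙ`, so minimality of
`wₙ` and the lattice identity `F(u ⊔ v) + F(u ⊓ v) = F u + F v` give `F uₙ ≤ F W`. The `uₙ` converge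
in `L²` to `w ⊔ W` and are bounded in `H`, so lower semicontinuity yields `F (w ⊔ W) ≤ F W`. Off
`{w > 0}` we have `w ≤ 0 = W`, so `w ⊔ W` is admissible for `{w > 0}`, hence a minimizer there, and
by strict convexity of `F` it equals `W` a.e.
-/

section L2

lemma integral_mul_eq_inner_toLp {f g : X → ℝ} (hf : MemLp f 2 m) (hg : MemLp g 2 m) :
    ∫ x, f x * g x ∂m = inner ℝ (hf.toLp f) (hg.toLp g) := by
  rw [L2.inner_def]
  refine integral_congr_ae ?_
  filter_upwards [hf.coeFn_toLp, hg.coeFn_toLp] with x hfx hgx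
  simp [hfx, hgx, mul_comm]

variable {u : ℕ → X → ℝ} {v : X → ℝ}

lemma tendsto_toLp_of_integral_sq_sub (hu : ∀ n, MemLp (u n) 2 m) (hv : MemLp v 2 m)
    (h : Tendsto (fun n => ∫ x, (u n x - v x) ^ 2 ∂m) atTop (nhds 0)) :
    Tendsto (fun n => (hu n).toLp (u n)) atTop (nhds (hv.toLp v)) := by
  have hnorm : ∀ n, ‖(hu n).toLp (u n) - hv.toLp v‖ = √(∫ x, (u n x - v x) ^ 2 ∂m) := by
    intro n
    rw [← MemLp.toLp_sub, norm_eq_sqrt_real_inner, ← integral_mul_eq_inner_toLp]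
    simp only [Pi.sub_apply, sq]
  rw [tendsto_iff_norm_sub_tendsto_zero, funext hnorm, ← Real.sqrt_zero]
  exact (Real.continuous_sqrt.tendsto 0).comp h

lemma tendsto_integral_mul_of_integral_sq_sub {f : X → ℝ} (hf : MemLp f 2 m)
    (hu : ∀ n, MemLp (u n) 2 m) (hv : MemLp v 2 m)
    (h : Tendsto (fun n => ∫ x, (u n x - v x) ^ 2 ∂m) atTop (nhds 0)) :
    Tendsto (fun n => ∫ x, f x * u n x ∂m) atTop (nhds (∫ x, f x * v x ∂m)) := by
  simp only [integral_mul_eq_inner_toLp hf (hu _), integral_mul_eq_inner_toLp hf hv]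
  exact tendsto_const_nhds.inner (tendsto_toLp_of_integral_sq_sub hu hv h)

lemma tendsto_integral_sq_of_integral_sq_sub (hu : ∀ n, MemLp (u n) 2 m) (hv : MemLp v 2 m)
    (h : Tendsto (fun n => ∫ x, (u n x - v x) ^ 2 ∂m) atTop (nhds 0)) :
    Tendsto (fun n => ∫ x, u n x ^ 2 ∂m) atTop (nhds (∫ x, v x ^ 2 ∂m)) := by
  have hlim := tendsto_toLp_of_integral_sq_sub hu hv h
  simp only [sq, integral_mul_eq_inner_toLp (hu _) (hu _), integral_mul_eq_inner_toLp hv hv]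
  exact hlim.inner hlim

lemma tendsto_integral_sq_sub_sup (g : X → ℝ) (hu : ∀ n, MemLp (u n) 2 m) (hv : MemLp v 2 m)
    (h : Tendsto (fun n => ∫ x, (u n x - v x) ^ 2 ∂m) atTop (nhds 0)) :
    Tendsto (fun n => ∫ x, ((u n ⊔ g) x - (v ⊔ g) x) ^ 2 ∂m) atTop (nhds 0) := by
  refine squeeze_zero (fun n => integral_nonneg fun x => sq_nonneg _) (fun n => ?_) h
  refine integral_mono_of_nonneg (ae_of_all _ fun x => sq_nonneg _)
    ((hu n).sub hv).integrable_sq (ae_of_all _ fun x => ?_)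
  simpa only [Pi.sup_apply, sq_abs] using
    pow_le_pow_left₀ (abs_nonneg _) (abs_max_sub_max_le_abs (u n x) (v x) (g x)) 2

end L2

lemma integral_add_integral_eq {φ ψ α β : X → ℝ} (hφ : Integrable φ m) (hψ : Integrable ψ m)
    (hα : Integrable α m) (hβ : Integrable β m) (h : ∀ᵐ x ∂m, φ x + ψ x = α x + β x) :
    ∫ x, φ x ∂m + ∫ x, ψ x ∂m = ∫ x, α x ∂m + ∫ x, β x ∂m := by
  rw [← integral_add hφ hψ, ← integral_add hα hβ]
  exact integral_congr_ae h

namespace Setting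

variable (S : Setting X m) {u v : X → ℝ}

lemma neg_mem (hu : u ∈ S.H) : -u ∈ S.H := by
  simpa using S.smul_mem (-1) hu

lemma D_neg (hu : u ∈ S.H) : ∀ᵐ x ∂m, S.D (-u) x = S.D u x := by
  filter_upwards [S.D3 (-1) hu] with x hx
  simpa using hx

lemma D_zero : ∀ᵐ x ∂m, S.D 0 x = 0 := by
  filter_upwards [S.D3 0 S.zero_mem] with x hx
  simpa using hx

lemma D_inf (hu : u ∈ S.H) (hv : v ∈ S.H) :
    ∀ᵐ x ∂m, S.D (u ⊓ v) x = if v x < u x then S.D v x else S.D u x := by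
  have hnu := S.neg_mem hu
  have hnv := S.neg_mem hv
  have e : u ⊓ v = -(-v ⊔ -u) := by
    rw [neg_sup, neg_neg, neg_neg, inf_comm]
  filter_upwards [S.D4 hnv hnu, S.D_neg (S.sup_mem hnv hnu), S.D_neg hv, S.D_neg hu]
    with x h4 hneg hv' hu'
  rw [e, hneg, h4]
  simp only [Pi.neg_apply, neg_lt_neg_iff, hv', hu']

end Setting

variable {S : Setting X m} {a : ℝ} {f u v : X → ℝ}

lemma integrable_mul_of_mem (hf : MemLp f 2 m) (hu : u ∈ S.H) :
    Integrable (fun x => f x * u x) m :=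
  hf.integrable_mul (S.memL2 hu)

lemma F_sup_add_F_inf (hf : MemLp f 2 m) (hu : u ∈ S.H) (hv : v ∈ S.H) :
    F S a f (u ⊔ v) + F S a f (u ⊓ v) = F S a f u + F S a f v := by
  have hsup := S.sup_mem hu hv
  have hinf := S.inf_mem hu hv
  have hD : ∫ x, S.D (u ⊔ v) x ^ 2 ∂m + ∫ x, S.D (u ⊓ v) x ^ 2 ∂m
      = ∫ x, S.D u x ^ 2 ∂m + ∫ x, S.D v x ^ 2 ∂m := by
    refine integral_add_integral_eq (S.gradL2 hsup).integrable_sq (S.gradL2 hinf).integrable_sq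
      (S.gradL2 hu).integrable_sq (S.gradL2 hv).integrable_sq ?_
    filter_upwards [S.D4 hu hv, S.D_inf hu hv] with x hsupx hinfx
    split_ifs at hsupx hinfx <;> rw [hsupx, hinfx]
    ring
  have hsq : ∫ x, (u ⊔ v) x ^ 2 ∂m + ∫ x, (u ⊓ v) x ^ 2 ∂m
      = ∫ x, u x ^ 2 ∂m + ∫ x, v x ^ 2 ∂m := by
    refine integral_add_integral_eq (S.memL2 hsup).integrable_sq (S.memL2 hinf).integrable_sq
      (S.memL2 hu).integrable_sq (S.memL2 hv).integrable_sq (ae_of_all _ fun x => ?_)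
    rcases le_total (u x) (v x) with h | h <;> simp [h, add_comm]
  have hlin : ∫ x, f x * (u ⊔ v) x ∂m + ∫ x, f x * (u ⊓ v) x ∂m
      = ∫ x, f x * u x ∂m + ∫ x, f x * v x ∂m := by
    refine integral_add_integral_eq (integrable_mul_of_mem hf hsup)
      (integrable_mul_of_mem hf hinf) (integrable_mul_of_mem hf hu) (integrable_mul_of_mem hf hv)
      (ae_of_all _ fun x => ?_)
    simp only [Pi.sup_apply, Pi.inf_apply, ← mul_add, max_add_min]
  simp only [F]
  linear_combination (1 / 2 : ℝ) * hD + (a / 2) * hsq - hlin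

lemma F_midpoint_le (hf : MemLp f 2 m) (hu : u ∈ S.H) (hv : v ∈ S.H) :
    F S a f ((1 / 2 : ℝ) • u + (1 / 2 : ℝ) • v) + a / 8 * ∫ x, (u x - v x) ^ 2 ∂m
      ≤ (F S a f u + F S a f v) / 2 := by
  set mid := (1 / 2 : ℝ) • u + (1 / 2 : ℝ) • v
  have hmidH : mid ∈ S.H := S.add_mem (S.smul_mem _ hu) (S.smul_mem _ hv)
  have hmid : ∀ x, mid x = (u x + v x) / 2 := fun x => by simp [mid]; ring
  have hD : ∫ x, S.D mid x ^ 2 ∂m ≤ ∫ x, (S.D u x ^ 2 + S.D v x ^ 2) / 2 ∂m := by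
    refine integral_mono_ae (S.gradL2 hmidH).integrable_sq
      (((S.gradL2 hu).integrable_sq.add (S.gradL2 hv).integrable_sq).div_const 2) ?_
    filter_upwards [S.D2 (S.smul_mem (1 / 2) hu) (S.smul_mem (1 / 2) hv),
      S.D3 (1 / 2) hu, S.D3 (1 / 2) hv, S.D1 hmidH] with x hsub hu' hv' hpos
    rw [hu', hv', abs_of_pos one_half_pos] at hsub
    nlinarith [sq_nonneg (S.D u x - S.D v x)]
  have hsq : ∫ x, mid x ^ 2 ∂m + ∫ x, (u x - v x) ^ 2 / 4 ∂m
      = ∫ x, u x ^ 2 / 2 ∂m + ∫ x, v x ^ 2 / 2 ∂m := by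
    refine integral_add_integral_eq (S.memL2 hmidH).integrable_sq
      (((S.memL2 hu).sub (S.memL2 hv)).integrable_sq.div_const 4)
      ((S.memL2 hu).integrable_sq.div_const 2) ((S.memL2 hv).integrable_sq.div_const 2)
      (ae_of_all _ fun x => ?_)
    rw [hmid]; ring
  have hlin : ∫ x, f x * mid x ∂m + ∫ x, f x * mid x ∂m
      = ∫ x, f x * u x ∂m + ∫ x, f x * v x ∂m := by
    refine integral_add_integral_eq (integrable_mul_of_mem hf hmidH)
      (integrable_mul_of_mem hf hmidH) (integrable_mul_of_mem hf hu) (integrable_mul_of_mem hf hv)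
      (ae_of_all _ fun x => ?_)
    rw [hmid]; ring
  rw [integral_div, integral_add (S.gradL2 hu).integrable_sq (S.gradL2 hv).integrable_sq] at hD
  simp only [integral_div] at hsq
  simp only [F]
  linear_combination (1 / 2 : ℝ) * hD + (a / 2) * hsq - hlin / 2

lemma IsMinimizer.ae_eq {Ω : Set X} (ha : 0 < a) (hf : MemLp f 2 m)
    (hu : IsMinimizer S Ω a f u) (hv : IsMinimizer S Ω a f v) : u =ᵐ[m] v := by
  have hmid : (1 / 2 : ℝ) • u + (1 / 2 : ℝ) • v ∈ H0 S Ω := by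
    refine ⟨S.add_mem (S.smul_mem _ hu.1.1) (S.smul_mem _ hv.1.1), ?_⟩
    filter_upwards [hu.1.2, hv.1.2] with x hux hvx hx
    simp [hux hx, hvx hx]
  have hFuv : F S a f u = F S a f v := le_antisymm (hu.2 v hv.1) (hv.2 u hu.1)
  have hdist : ∫ x, (u x - v x) ^ 2 ∂m ≤ 0 := by
    nlinarith [hu.2 _ hmid, F_midpoint_le (a := a) hf hu.1.1 hv.1.1]
  have hint := ((S.memL2 hu.1.1).sub (S.memL2 hv.1.1)).integrable_sq
  filter_upwards [(integral_eq_zero_iff_of_nonneg (fun x => sq_nonneg _) hint).1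
    (le_antisymm hdist (integral_nonneg fun x => sq_nonneg _))] with x hx
  exact sub_eq_zero.1 (pow_eq_zero_iff two_ne_zero |>.1 hx)

lemma F_sup_zero_le (ha : 0 ≤ a) (hf : MemLp f 2 m) (hf0 : 0 ≤ᵐ[m] f) (hu : u ∈ S.H) :
    F S a f (u ⊔ 0) ≤ F S a f u := by
  have h0 : (0 : X → ℝ) ∈ S.H := S.zero_mem
  have hpH := S.sup_mem hu h0
  have hD : ∫ x, S.D (u ⊔ 0) x ^ 2 ∂m ≤ ∫ x, S.D u x ^ 2 ∂m := by
    refine integral_mono_ae (S.gradL2 hpH).integrable_sq (S.gradL2 hu).integrable_sq ?_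
    filter_upwards [S.D4 hu h0, S.D_zero] with x hsupx h0x
    rw [hsupx]
    split_ifs
    · exact le_rfl
    · rw [h0x, zero_pow two_ne_zero]
      exact sq_nonneg _
  have hsq : ∫ x, (u ⊔ 0) x ^ 2 ∂m ≤ ∫ x, u x ^ 2 ∂m := by
    refine integral_mono (S.memL2 hpH).integrable_sq (S.memL2 hu).integrable_sq fun x => ?_
    rcases le_total (u x) 0 with h | h <;> simp [h, sq_nonneg]
  have hlin : ∫ x, f x * u x ∂m ≤ ∫ x, f x * (u ⊔ 0) x ∂m := by
    refine integral_mono_ae (integrable_mul_of_mem hf hu) (integrable_mul_of_mem hf hpH) ?_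
    filter_upwards [hf0] with x hfx
    exact mul_le_mul_of_nonneg_left le_sup_left hfx
  simp only [F]
  gcongr

lemma IsMinimizer.nonneg {Ω : Set X} (ha : 0 < a) (hf : MemLp f 2 m) (hf0 : 0 ≤ᵐ[m] f)
    (hu : IsMinimizer S Ω a f u) : 0 ≤ᵐ[m] u := by
  have hpos : IsMinimizer S Ω a f (u ⊔ 0) := by
    refine ⟨⟨S.sup_mem hu.1.1 S.zero_mem, ?_⟩, fun v hv => ?_⟩
    · filter_upwards [hu.1.2] with x hx hxΩ
      simp [hx hxΩ]
    · exact (F_sup_zero_le ha.le hf hf0 hu.1.1).trans (hu.2 v hv)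
  filter_upwards [hpos.ae_eq ha hf hu] with x hx
  rw [← hx]
  exact le_sup_right

lemma IsMinimizer.F_sup_le {Ω : Set X} (hf : MemLp f 2 m) (hu : IsMinimizer S Ω a f u)
    (hv : v ∈ S.H) (hinf : u ⊓ v ∈ H0 S Ω) : F S a f (u ⊔ v) ≤ F S a f v := by
  linarith [F_sup_add_F_inf (a := a) hf hu.1.1 hv, hu.2 _ hinf]

lemma normHsq_le_of_F_le (ha : 0 < a) (hf : MemLp f 2 m) (hu : u ∈ S.H) {K : ℝ}
    (hK : F S a f u ≤ K) :
    normHsq S u ≤ (2 + 4 / a) * (K + (∫ x, f x ^ 2 ∂m) / a) := by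
  have hfu : ∫ x, f x * u x ∂m ≤ ∫ x, (a / 4 * u x ^ 2 + f x ^ 2 / a) ∂m := by
    refine integral_mono (integrable_mul_of_mem hf hu)
      (((S.memL2 hu).integrable_sq.const_mul _).add (hf.integrable_sq.div_const _)) fun x => ?_
    have hsq : a / 4 * u x ^ 2 + f x ^ 2 / a - f x * u x = (a * u x - 2 * f x) ^ 2 / (4 * a) := by
      field_simp; ring
    show f x * u x ≤ a / 4 * u x ^ 2 + f x ^ 2 / a
    nlinarith [div_nonneg (sq_nonneg (a * u x - 2 * f x)) (by positivity : (0 : ℝ) ≤ 4 * a)]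
  rw [integral_add ((S.memL2 hu).integrable_sq.const_mul _) (hf.integrable_sq.div_const _),
    integral_const_mul, integral_div] at hfu
  simp only [F] at hK
  have hD0 : 0 ≤ ∫ x, S.D u x ^ 2 ∂m := integral_nonneg fun x => sq_nonneg _
  have hU0 : 0 ≤ ∫ x, u x ^ 2 ∂m := integral_nonneg fun x => sq_nonneg _
  have hU : ∫ x, u x ^ 2 ∂m ≤ 4 / a * (K + (∫ x, f x ^ 2 ∂m) / a) := by
    rw [div_mul_eq_mul_div, le_div_iff₀ ha]
    linarith
  have hD : ∫ x, S.D u x ^ 2 ∂m ≤ 2 * (K + (∫ x, f x ^ 2 ∂m) / a) := by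
    nlinarith [mul_nonneg ha.le hU0]
  simp only [normHsq]
  linear_combination hU + hD

lemma F_le_of_tendsto (hlsc : GradLSC S) (ha : 0 < a) (hf : MemLp f 2 m)
    {u : ℕ → X → ℝ} (hu : ∀ n, u n ∈ S.H) {K : ℝ} (hK : ∀ n, F S a f (u n) ≤ K)
    (hconv : Tendsto (fun n => ∫ x, (u n x - v x) ^ 2 ∂m) atTop (nhds 0)) :
    F S a f v ≤ K := by
  obtain ⟨hvH, hDv⟩ :=
    hlsc u v hu ⟨_, fun n => normHsq_le_of_F_le ha hf (hu n) (hK n)⟩ hconv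
  have hsq := tendsto_integral_sq_of_integral_sq_sub (fun n => S.memL2 (hu n)) (S.memL2 hvH) hconv
  have hlin :=
    tendsto_integral_mul_of_integral_sq_sub hf (fun n => S.memL2 (hu n)) (S.memL2 hvH) hconv
  have hbound : Tendsto (fun n => 2 * (K - a / 2 * ∫ x, u n x ^ 2 ∂m + ∫ x, f x * u n x ∂m))
      atTop (nhds (2 * (K - a / 2 * ∫ x, v x ^ 2 ∂m + ∫ x, f x * v x ∂m))) :=
    ((tendsto_const_nhds.sub (hsq.const_mul _)).add hlin).const_mul 2
  have hDn : ∀ n, ∫ x, S.D (u n) x ^ 2 ∂m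
      ≤ 2 * (K - a / 2 * ∫ x, u n x ^ 2 ∂m + ∫ x, f x * u n x ∂m) := by
    intro n
    have hKn := hK n
    simp only [F] at hKn
    linarith
  have hliminf := liminf_le_liminf (Eventually.of_forall hDn)
    (isBoundedUnder_of ⟨0, fun n => integral_nonneg fun x => sq_nonneg _⟩)
    hbound.isBoundedUnder_le.isCoboundedUnder_ge
  rw [hbound.liminf_eq] at hliminf
  simp only [F]
  linarith [hDv.trans hliminf]

theorem statement_15_general {X : Type*} [MeasurableSpace X] {m : Measure X} [IsFiniteMeasure m]
    (S : Setting X m) (hlsc : GradLSC S)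
    (Ω : ℕ → Set X)
    (wn : ℕ → X → ℝ) (hwn : ∀ n, IsMinimizer S (Ω n) 1 (fun _ => 1) (wn n))
    {w : X → ℝ} (hwH : w ∈ S.H)
    (hconv : Tendsto (fun n => ∫ x, (wn n x - w x) ^ 2 ∂m) atTop (nhds 0))
    {W : X → ℝ} (hW : IsMinimizer S {x | 0 < w x} 1 (fun _ => 1) W) :
    ∀ᵐ x ∂m, w x ≤ W x := by
  have hone : MemLp (fun _ : X => (1 : ℝ)) 2 m := memLp_const 1
  have hW0 : 0 ≤ᵐ[m] W := hW.nonneg one_pos hone (ae_of_all _ fun _ => zero_le_one)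
  have hFn : ∀ n, F S 1 (fun _ => 1) (wn n ⊔ W) ≤ F S 1 (fun _ => 1) W := by
    refine fun n => (hwn n).F_sup_le hone hW.1.1 ⟨S.inf_mem (hwn n).1.1 hW.1.1, ?_⟩
    filter_upwards [(hwn n).1.2, hW0] with x hwnx hWx hx
    simpa [hwnx hx] using hWx
  have hFsup : F S 1 (fun _ => 1) (w ⊔ W) ≤ F S 1 (fun _ => 1) W :=
    F_le_of_tendsto hlsc one_pos hone (fun n => S.sup_mem (hwn n).1.1 hW.1.1) hFn
      (tendsto_integral_sq_sub_sup W (fun n => S.memL2 (hwn n).1.1) (S.memL2 hwH) hconv)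
  have hsupH0 : w ⊔ W ∈ H0 S {x | 0 < w x} := by
    refine ⟨S.sup_mem hwH hW.1.1, ?_⟩
    filter_upwards [hW.1.2] with x hWx hx
    simp [hWx hx, not_lt.1 hx]
  have hsup_eq : w ⊔ W =ᵐ[m] W :=
    IsMinimizer.ae_eq one_pos hone ⟨hsupH0, fun u hu => hFsup.trans (hW.2 u hu)⟩ hW
  filter_upwards [hsup_eq] with x hx
  exact le_sup_left.trans_eq hx

/-- if energy sets `Ωₙ` weak-γ-converge to `Ω = {w > 0}` with
`w = L²-lim w_{Ωₙ}`, then `w ≤ w_Ω` m-a.e. -/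
theorem statement_15 {X : Type*} [MeasurableSpace X] {m : Measure X} [IsFiniteMeasure m]
    (S : Setting X m) (hcpt : CompactEmbedding S) (hlsc : GradLSC S)
    (Ω : ℕ → Set X) (hΩ : ∀ n, MeasurableSet (Ω n))
    (wn : ℕ → X → ℝ) (hwn : ∀ n, IsMinimizer S (Ω n) 1 (fun _ => 1) (wn n))
    (hEn : ∀ n, m (Ω n \ {x | 0 < wn n x}) = 0)
    {w : X → ℝ} (hwH : w ∈ S.H)
    (hconv : Tendsto (fun n => ∫ x, (wn n x - w x) ^ 2 ∂m) atTop (nhds 0))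
    {W : X → ℝ} (hW : IsMinimizer S {x | 0 < w x} 1 (fun _ => 1) W) :
    ∀ᵐ x ∂m, w x ≤ W x :=
  statement_15_general S hlsc Ω wn hwn hwH hconv hW

end AbsSob
end
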